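/- Let $\mathcal{X}, A$ be finite sets, $\gamma\in(0,1)$, and suppose rewards $f_1, f_2 : \mathcal{X}\times A \to \mathbb{R}$ and transition kernels $P_1, P_2 : \mathcal{X}\times A \to \mathcal{P}(\mathcal{X})$ satisfy $\sup_{x,a}|f_1(x,a)-f_2(x,a)| \le \epsilon_f$ and $\sup_{x,a}\|P_1(x,a)-P_2(x,a)\|_{\mathrm{TV}} \le \epsilon_P$, with $\|f_2\|_\infty \le F$. Then the corresponding optimal Q-functions $Q_1^*, Q_2^*$ (fixed points of the respective Bellman optimality operators with discount $\gamma$) satisfy $\|Q_1^* - Q_2^*\|_\infty \le \frac{(1-\gamma)\epsilon_f + \gamma F \epsilon_P}{(1-\gamma)^2}$. -/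

import Mathlib

/-! Maximisation over actions is 1-Lipschitz for the sup norm, so the Bellman operators satisfy
`‖T q‖ ≤ ‖f‖ + γ ‖q‖` and `|T₁ q₁ - T₂ q₂| ≤ |f₁ - f₂| + γ ‖q₁ - q₂‖ + γ ‖P₁ - P₂‖_TV ‖q₂‖`.
At the fixed points these read `(1 - γ) ‖Q₂‖ ≤ F` and
`(1 - γ) ‖Q₁ - Q₂‖ ≤ ε_f + γ ε_P ‖Q₂‖`, and substituting the first into the second gives the bound.
Norms on `S → α → ℝ` are Mathlib's sup norms. -/

open Finset

variable {𝒳 A : Type*} [Fintype 𝒳] [Fintype A] [Nonempty 𝒳] [Nonempty A]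

/-- The Bellman optimality operator associated with reward `f`, transition kernel `P`
and discount `γ`. -/
noncomputable def bellman (f : 𝒳 → A → ℝ) (P : 𝒳 → A → 𝒳 → ℝ) (γ : ℝ)
    (q : 𝒳 → A → ℝ) : 𝒳 → A → ℝ :=
  fun x a => f x a + γ * ∑ y : 𝒳, P x a y *
    (Finset.univ.sup' Finset.univ_nonempty (fun a' : A => q y a'))

section
variable {S α : Type*} [Fintype S] [Fintype α]

theorem abs_apply_apply_le_norm (q : S → α → ℝ) (s : S) (a : α) : |q s a| ≤ ‖q‖ :=
  (norm_le_pi_norm (q s) a).trans (norm_le_pi_norm q s)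

theorem norm_le_of_forall_abs_apply_apply_le {q : S → α → ℝ} {C : ℝ} (hC : 0 ≤ C)
    (h : ∀ s a, |q s a| ≤ C) : ‖q‖ ≤ C :=
  (pi_norm_le_iff_of_nonneg hC).2 fun s => (pi_norm_le_iff_of_nonneg hC).2 (h s)

theorem abs_sum_mul_le (w v : S → ℝ) : |∑ s, w s * v s| ≤ (∑ s, |w s|) * ‖v‖ := by
  rw [sum_mul]
  refine (abs_sum_le_sum_abs _ _).trans (sum_le_sum fun s _ => ?_)
  rw [abs_mul]
  exact mul_le_mul_of_nonneg_left (norm_le_pi_norm v s) (abs_nonneg _)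

theorem abs_sum_mul_le_of_stochastic {p : S → ℝ} (hp : ∀ s, 0 ≤ p s) (hp_sum : ∑ s, p s = 1)
    (v : S → ℝ) : |∑ s, p s * v s| ≤ ‖v‖ := by
  simpa [abs_of_nonneg (hp _), hp_sum] using abs_sum_mul_le p v

variable [Nonempty α]

theorem abs_sup'_univ_le_norm (g : α → ℝ) : |univ.sup' univ_nonempty g| ≤ ‖g‖ := by
  obtain ⟨a⟩ := ‹Nonempty α›
  have hle : ∀ b, |g b| ≤ ‖g‖ := norm_le_pi_norm g
  rw [abs_le]
  constructor
  · exact (neg_le_of_abs_le (hle a)).trans (le_sup' g (mem_univ a))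
  · exact sup'_le _ _ fun b _ => (le_abs_self _).trans (hle b)

theorem abs_sup'_univ_sub_sup'_univ_le_norm (g h : α → ℝ) :
    |univ.sup' univ_nonempty g - univ.sup' univ_nonempty h| ≤ ‖g - h‖ := by
  have key : ∀ g h : α → ℝ, univ.sup' univ_nonempty g ≤ univ.sup' univ_nonempty h + ‖g - h‖ :=
    fun g h => sup'_le _ _ fun b _ => by
      have hb : g b - h b ≤ ‖g - h‖ := (le_abs_self _).trans (norm_le_pi_norm (g - h) b)
      linarith [le_sup' h (mem_univ b)]
  rw [abs_sub_le_iff]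
  exact ⟨by linarith [key g h], by linarith [key h g, norm_sub_rev g h]⟩

noncomputable def maxValue (q : S → α → ℝ) : S → ℝ := fun s => univ.sup' univ_nonempty (q s)

theorem norm_maxValue_le (q : S → α → ℝ) : ‖maxValue q‖ ≤ ‖q‖ :=
  (pi_norm_le_iff_of_nonneg (norm_nonneg q)).2 fun s =>
    (abs_sup'_univ_le_norm (q s)).trans (norm_le_pi_norm q s)

theorem norm_maxValue_sub_maxValue_le (q₁ q₂ : S → α → ℝ) :
    ‖maxValue q₁ - maxValue q₂‖ ≤ ‖q₁ - q₂‖ :=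
  (pi_norm_le_iff_of_nonneg (norm_nonneg _)).2 fun s =>
    (abs_sup'_univ_sub_sup'_univ_le_norm (q₁ s) (q₂ s)).trans (norm_le_pi_norm (q₁ - q₂) s)

theorem bellman_apply (f : S → α → ℝ) (P : S → α → S → ℝ) (γ : ℝ) (q : S → α → ℝ) (s : S)
    (a : α) : bellman f P γ q s a = f s a + γ * ∑ y, P s a y * maxValue q y :=
  rfl

variable {P P₁ P₂ : S → α → S → ℝ} {γ : ℝ}

theorem norm_bellman_le (hP : ∀ s a y, 0 ≤ P s a y) (hP_sum : ∀ s a, ∑ y, P s a y = 1)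
    (hγ : 0 ≤ γ) (f q : S → α → ℝ) : ‖bellman f P γ q‖ ≤ ‖f‖ + γ * ‖q‖ := by
  refine norm_le_of_forall_abs_apply_apply_le (by positivity) fun s a => ?_
  rw [bellman_apply]
  calc |f s a + γ * ∑ y, P s a y * maxValue q y|
      ≤ |f s a| + γ * |∑ y, P s a y * maxValue q y| :=
        (abs_add_le _ _).trans_eq (by rw [abs_mul, abs_of_nonneg hγ])
    _ ≤ ‖f‖ + γ * ‖q‖ := by
        gcongr
        · exact abs_apply_apply_le_norm f s a
        · exact (abs_sum_mul_le_of_stochastic (hP s a) (hP_sum s a) _).trans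
            (norm_maxValue_le q)

theorem one_sub_mul_norm_le_of_bellman_fixed (hP : ∀ s a y, 0 ≤ P s a y)
    (hP_sum : ∀ s a, ∑ y, P s a y = 1) (hγ : 0 ≤ γ) {f Q : S → α → ℝ}
    (hQ : bellman f P γ Q = Q) : (1 - γ) * ‖Q‖ ≤ ‖f‖ := by
  have := norm_bellman_le hP hP_sum hγ f Q
  rw [hQ] at this
  linarith

theorem abs_bellman_sub_bellman_le (hP₁ : ∀ s a y, 0 ≤ P₁ s a y)
    (hP₁_sum : ∀ s a, ∑ y, P₁ s a y = 1) (hγ : 0 ≤ γ) (f₁ f₂ q₁ q₂ : S → α → ℝ) (s : S) (a : α) :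
    |bellman f₁ P₁ γ q₁ s a - bellman f₂ P₂ γ q₂ s a| ≤
      |f₁ s a - f₂ s a| + γ * ‖q₁ - q₂‖ + γ * (∑ y, |P₁ s a y - P₂ s a y|) * ‖q₂‖ := by
  set V₁ := maxValue q₁
  set V₂ := maxValue q₂
  have hsplit : bellman f₁ P₁ γ q₁ s a - bellman f₂ P₂ γ q₂ s a = (f₁ s a - f₂ s a)
      + γ * ∑ y, P₁ s a y * (V₁ - V₂) y + γ * ∑ y, (P₁ s a y - P₂ s a y) * V₂ y := by
    simp only [bellman_apply, Pi.sub_apply, mul_sub, sub_mul, sum_sub_distrib]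
    ring
  have hsame : |∑ y, P₁ s a y * (V₁ - V₂) y| ≤ ‖q₁ - q₂‖ :=
    (abs_sum_mul_le_of_stochastic (hP₁ s a) (hP₁_sum s a) _).trans
      (norm_maxValue_sub_maxValue_le q₁ q₂)
  have hdiff : |∑ y, (P₁ s a y - P₂ s a y) * V₂ y| ≤ (∑ y, |P₁ s a y - P₂ s a y|) * ‖q₂‖ :=
    (abs_sum_mul_le _ _).trans
      (mul_le_mul_of_nonneg_left (norm_maxValue_le q₂) (sum_nonneg fun _ _ => abs_nonneg _))
  rw [hsplit, mul_assoc γ]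
  refine (abs_add_three _ _ _).trans ?_
  simp only [abs_mul, abs_of_nonneg hγ]
  gcongr

end

/-- Perturbation bound for optimal Q-functions. If the rewards differ by at most `ε_f`
in sup norm and the transition kernels differ by at most `ε_P` in total variation
(`ℓ¹`) norm, with `‖f₂‖_∞ ≤ F`, then the corresponding optimal Q-functions satisfy
`‖Q₁* - Q₂*‖_∞ ≤ ((1-γ)ε_f + γ F ε_P) / (1-γ)²`. -/
theorem optimal_Q_perturbation_bound
    (f₁ f₂ : 𝒳 → A → ℝ) (P₁ P₂ : 𝒳 → A → 𝒳 → ℝ)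
    (hP₁_nonneg : ∀ x a y, 0 ≤ P₁ x a y) (hP₁_sum : ∀ x a, ∑ y : 𝒳, P₁ x a y = 1)
    (hP₂_nonneg : ∀ x a y, 0 ≤ P₂ x a y) (hP₂_sum : ∀ x a, ∑ y : 𝒳, P₂ x a y = 1)
    (γ : ℝ) (hγ0 : 0 < γ) (hγ1 : γ < 1)
    (εf εP F : ℝ)
    (hf : ∀ x a, |f₁ x a - f₂ x a| ≤ εf)
    (hP : ∀ x a, ∑ y : 𝒳, |P₁ x a y - P₂ x a y| ≤ εP)
    (hF : ∀ x a, |f₂ x a| ≤ F)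
    (Q₁ Q₂ : 𝒳 → A → ℝ)
    (hQ₁ : bellman f₁ P₁ γ Q₁ = Q₁) (hQ₂ : bellman f₂ P₂ γ Q₂ = Q₂) :
    ∀ x a, |Q₁ x a - Q₂ x a| ≤ ((1 - γ) * εf + γ * F * εP) / (1 - γ) ^ 2 := by
  intro x a
  have hεf : 0 ≤ εf := (abs_nonneg _).trans (hf x a)
  have hεP : 0 ≤ εP := (sum_nonneg fun _ _ => abs_nonneg _).trans (hP x a)
  have hF0 : 0 ≤ F := (abs_nonneg _).trans (hF x a)
  have hQ₂_norm : (1 - γ) * ‖Q₂‖ ≤ F :=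
    (one_sub_mul_norm_le_of_bellman_fixed hP₂_nonneg hP₂_sum hγ0.le hQ₂).trans
      (norm_le_of_forall_abs_apply_apply_le hF0 hF)
  have hQ_dist : ‖Q₁ - Q₂‖ ≤ εf + γ * ‖Q₁ - Q₂‖ + γ * εP * ‖Q₂‖ := by
    refine norm_le_of_forall_abs_apply_apply_le (by positivity) fun s b => ?_
    have := abs_bellman_sub_bellman_le (P₂ := P₂) hP₁_nonneg hP₁_sum hγ0.le f₁ f₂ Q₁ Q₂ s b
    rw [hQ₁, hQ₂] at this
    refine this.trans ?_
    gcongr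
    exacts [hf s b, hP s b]
  have hγ' : 0 < 1 - γ := sub_pos.2 hγ1
  rw [le_div_iff₀ (by positivity)]
  calc |Q₁ x a - Q₂ x a| * (1 - γ) ^ 2 ≤ ‖Q₁ - Q₂‖ * (1 - γ) ^ 2 := by
        gcongr
        exact abs_apply_apply_le_norm (Q₁ - Q₂) x a
    _ = (1 - γ) * ((1 - γ) * ‖Q₁ - Q₂‖) := by ring
    _ ≤ (1 - γ) * (εf + γ * εP * ‖Q₂‖) := by gcongr; linarith
    _ = (1 - γ) * εf + γ * εP * ((1 - γ) * ‖Q₂‖) := by ring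
    _ ≤ (1 - γ) * εf + γ * εP * F := by gcongr
    _ = (1 - γ) * εf + γ * F * εP := by ring
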